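/- Let E → X be a G-equivariant vector bundle of rank r+1 in G-Sch_k, with associated equivariant projective bundle q: P(E) → X and first Chern class operator ξ_*^G = lim_i c_1(O_{P(E ×^G U_i)}(1)). Then the map Φ_{X,E}^G = Σ_{n=0}^{r} (ξ_*^G)^n · q_G^* : ∏_{n=0}^{r} Ω^G_{*−r+n}(X) → Ω_*^G(P(E)) is an isomorphism (equivariant projective bundle formula). -/
import Mathlib


/-!
Statement 10 (Heller–Malagón-López, Proposition `G-PB`): the equivariant
projective bundle formula.  For a `G`-equivariant vector bundle `E → X` of
rank `r + 1` in `G-Sch_k`, with associated equivariant projective bundle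
`q : ℙ(E) → X` and equivariant first Chern class operator
`ξ_*^G = lim_i c₁(O_{ℙ(E ×^G U_i)}(1))`, the map
`Φ_{X,E}^G = Σ_{n=0}^{r} (ξ_*^G)^n ∘ q_G^* :
  ∏_{n=0}^{r} Ω^G_{*−r+n}(X) → Ω_*^G(ℙ(E))`
is an isomorphism.
-/

/-- An inverse system of abelian groups indexed by `ℕ`. -/
structure InvSys : Type 1 where
  A : ℕ → Type
  [grp : ∀ i, AddCommGroup (A i)]
  t : ∀ i, A (i + 1) →+ A i

attribute [instance] InvSys.grp

namespace InvSys

/-- The inverse limit `lim_i A i`, realized as the subgroup of compatible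
sequences in the product. -/
def lim (S : InvSys) : AddSubgroup (∀ i, S.A i) where
  carrier := { x | ∀ i, S.t i (x (i + 1)) = x i }
  add_mem' := by
    intro a b ha hb i
    simp [ha i, hb i]
  zero_mem' := by intro i; simp
  neg_mem' := by
    intro a ha i
    simp [ha i]

/-- A morphism of inverse systems. -/
structure Hom (S T : InvSys) where
  f : ∀ i, S.A i →+ T.A i
  comm : ∀ i x, T.t i (f (i + 1) x) = f i (S.t i x)

/-- The map induced on inverse limits by a morphism of inverse systems. -/
def Hom.lim {S T : InvSys} (φ : Hom S T) : S.lim →+ T.lim where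
  toFun x := ⟨fun i => φ.f i (x.1 i), fun i => by
    rw [φ.comm i, x.2 i]⟩
  map_zero' := Subtype.ext (funext fun i => map_zero (φ.f i))
  map_add' a b := Subtype.ext (funext fun i => map_add (φ.f i) (a.1 i) (b.1 i))

/-- The map into the inverse limit induced by a compatible family of maps. -/
def intoLim (S : InvSys) {B : Type} [AddCommGroup B] (φ : ∀ i, B →+ S.A i)
    (comm : ∀ i x, S.t i (φ (i + 1) x) = φ i x) : B →+ S.lim where
  toFun x := ⟨fun i => φ i x, fun i => comm i x⟩
  map_zero' := Subtype.ext (funext fun i => map_zero (φ i))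
  map_add' a b := Subtype.ext (funext fun i => map_add (φ i) a b)

/-- The transition map `A j → A i` for `i ≤ j`. -/
def trans (S : InvSys) {i j : ℕ} (h : i ≤ j) : S.A j →+ S.A i :=
  Nat.leRecOn h (fun {k} (f : S.A k →+ S.A i) => f.comp (S.t k)) (AddMonoidHom.id (S.A i))

end InvSys

/-- The data of the equivariant projective bundle situation: the rank of the
`G`-equivariant bundle `E → X` is `r + 1`; the towers of `X` and of
`ℙ(E) ×^G U_i ≅ ℙ(E ×^G U_i)`; the levelwise pullbacks
`q_i^* : Ω_*(X ×^G U_i) → Ω_*(ℙ(E ×^G U_i))` along the projective bundles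
`q_i`; the levelwise first Chern class operators
`ξ_i = c₁(O_{ℙ(E ×^G U_i)}(1))`, compatible with the transitions since
`O_{ℙ_i}(1) = ℙ(φ_{ij})^* O_{ℙ_j}(1)`; and the levelwise projective bundle
formula (PB) of algebraic cobordism. -/
structure EquivariantProjBundleSetup : Type 1 where
  /-- `rank E = r + 1` -/
  r : ℕ
  /-- the tower `i ↦ Ω_*(X ×^G U_i)` -/
  base : InvSys
  /-- the tower `i ↦ Ω_*(ℙ(E ×^G U_i))` -/
  proj : InvSys
  /-- the levelwise pullbacks `q_i^*` -/
  q : InvSys.Hom base proj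
  /-- the levelwise first Chern class operators `ξ_i = c₁(O_{ℙ_i}(1))` -/
  xi : InvSys.Hom proj proj
  /-- the levelwise projective bundle formula for algebraic cobordism -/
  level_pb : ∀ i, Function.Bijective
      (fun v : Fin (r + 1) → base.A i =>
        ∑ n : Fin (r + 1), (⇑(xi.f i))^[n.1] (q.f i (v n)))

namespace InvSys

lemma Hom.comm_iter {S : InvSys} (φ : Hom S S) (i n : ℕ) (x : S.A (i + 1)) :
    S.t i ((⇑(φ.f (i + 1)))^[n] x) = (⇑(φ.f i))^[n] (S.t i x) := by
  induction n generalizing x with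
  | zero => rfl
  | succ n ih =>
    rw [Function.iterate_succ_apply, Function.iterate_succ_apply, ih, φ.comm]

lemma Hom.lim_iter_coe {S : InvSys} (φ : Hom S S) (n : ℕ) (x : S.lim) (i : ℕ) :
    ((⇑φ.lim)^[n] x).1 i = (⇑(φ.f i))^[n] (x.1 i) := by
  induction n generalizing x with
  | zero => rfl
  | succ n ih =>
    rw [Function.iterate_succ_apply, Function.iterate_succ_apply, ih]
    rfl

end InvSys

/-- **equivariant projective bundle formula.** For a
`G`-equivariant vector bundle `E → X` of rank `r + 1` in `G-Sch_k`, the map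
`Φ_{X,E}^G = Σ_{n=0}^{r} (ξ_*^G)^n ∘ q_G^* :
  ∏_{n=0}^{r} Ω^G_{*−r+n}(X) → Ω_*^G(ℙ(E))` is an isomorphism. -/
theorem equivariant_projective_bundle_formula (D : EquivariantProjBundleSetup) :
    Function.Bijective
      (fun v : Fin (D.r + 1) → D.base.lim =>
        ∑ n : Fin (D.r + 1), (⇑D.xi.lim)^[n.1] (D.q.lim (v n))) := by
  set Φ : ∀ i, (Fin (D.r + 1) → D.base.A i) → D.proj.A i :=
    fun i v => ∑ n : Fin (D.r + 1), (⇑(D.xi.f i))^[n.1] (D.q.f i (v n)) with hΦ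
  -- the limit map computed componentwise
  have key : ∀ (v : Fin (D.r + 1) → D.base.lim) (i : ℕ),
      (∑ n : Fin (D.r + 1), (⇑D.xi.lim)^[n.1] (D.q.lim (v n))).1 i
        = Φ i (fun n => (v n).1 i) := by
    intro v i
    have h1 : ((∑ n : Fin (D.r + 1), (⇑D.xi.lim)^[n.1] (D.q.lim (v n))) :
        D.proj.lim).1
        = ∑ n : Fin (D.r + 1),
            (((⇑D.xi.lim)^[n.1] (D.q.lim (v n)) : D.proj.lim).1) :=
      map_sum D.proj.lim.subtype _ _
    rw [h1, Finset.sum_apply]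
    refine Finset.sum_congr rfl fun n _ => ?_
    rw [D.xi.lim_iter_coe]
    rfl
  -- the levelwise map commutes with transitions
  have trans_comm : ∀ (i : ℕ) (w : Fin (D.r + 1) → D.base.A (i + 1)),
      D.proj.t i (Φ (i + 1) w) = Φ i (fun n => D.base.t i (w n)) := by
    intro i w
    rw [hΦ]
    simp only
    rw [map_sum]
    refine Finset.sum_congr rfl fun n _ => ?_
    rw [D.xi.comm_iter, D.q.comm]
  constructor
  · intro a b hab
    funext n
    apply Subtype.ext
    funext i
    have h := congrArg (fun x : D.proj.lim => x.1 i) hab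
    simp only [key] at h
    have := (D.level_pb i).1 h
    exact congrFun this n
  · intro y
    -- choose levelwise preimages
    have hch : ∀ i, ∃ w : Fin (D.r + 1) → D.base.A i, Φ i w = y.1 i :=
      fun i => (D.level_pb i).2 (y.1 i)
    choose w hw using hch
    have hcompat : ∀ i n, D.base.t i (w (i + 1) n) = w i n := by
      intro i n
      have h1 : Φ i (fun n => D.base.t i (w (i + 1) n)) = Φ i (w i) := by
        rw [← trans_comm, hw, hw, y.2]
      exact congrFun ((D.level_pb i).1 h1) n
    refine ⟨fun n => ⟨fun i => w i n, fun i => hcompat i n⟩, ?_⟩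
    apply Subtype.ext
    funext i
    rw [key]
    exact hw i
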